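/- arXiv:2106.07021 — 7 statements merged into one kernel-verified Lean document; each statement's English description precedes it below -/
import Mathlib

section
/- In a canonical game of 2m rounds (m ≥ 1) on ℂ^n, if both players use the same action group, i.e. A = B is a subgroup of the unitary group U(n) that contains every n×n permutation matrix, then player 1 has no strong winning strategy: for every sequence A_1, …, A_m ∈ A there exists a sequence B_1, …, B_m ∈ B such that B_m A_m ⋯ B_1 A_1 e_{q0} ≠ e_{qA}. -/
/-- The product of the moves in a canonical `2m`-round game, namely
`B_m * A_m * ⋯ * B_1 * A_1`, where player 1 plays `A_1, …, A_m` at odd rounds and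
player 2 plays `B_1, …, B_m` at even rounds. -/
noncomputable def canonicalProd {n m : ℕ} (As Bs : Fin m → Matrix (Fin n) (Fin n) ℂ) :
    Matrix (Fin n) (Fin n) ℂ :=
  ((List.ofFn fun i => Bs i * As i).reverse).prod

/-- The product of the moves in a noncanonical `2m+1`-round game, namely
`A_{m+1} * B_m * A_m * ⋯ * B_1 * A_1`, where player 1 makes the first and the
last move. -/
noncomputable def noncanonicalProd {n m : ℕ} (As : Fin (m + 1) → Matrix (Fin n) (Fin n) ℂ)
    (Bs : Fin m → Matrix (Fin n) (Fin n) ℂ) : Matrix (Fin n) (Fin n) ℂ :=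
  As (Fin.last m) * ((List.ofFn fun i : Fin m => Bs i * As i.castSucc).reverse).prod

/-- The underlying matrix of an element of a subgroup of the unitary group. -/
noncomputable def toMat {n : ℕ} {G : Subgroup (Matrix.unitaryGroup (Fin n) ℂ)} (x : G) :
    Matrix (Fin n) (Fin n) ℂ :=
  ((x : Matrix.unitaryGroup (Fin n) ℂ) : Matrix (Fin n) (Fin n) ℂ)

/-- `G` contains (the standard matrix representation of) the symmetric group `S_n`:
every `n × n` permutation matrix belongs to `G`. -/
def containsSn {n : ℕ} (G : Subgroup (Matrix.unitaryGroup (Fin n) ℂ)) : Prop :=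
  ∀ σ : Equiv.Perm (Fin n), ∃ P ∈ G,
    ((P : Matrix.unitaryGroup (Fin n) ℂ) : Matrix (Fin n) (Fin n) ℂ) = σ.permMatrix ℂ

/-- In a canonical game of `2m` rounds on `ℂ^n`, if both players use the same action
group containing every permutation matrix, then player 1 has no strong winning
strategy. -/
theorem canonical_same_group_no_sws_player1
    (n m : ℕ) (hn : 2 ≤ n) (hm : 1 ≤ m)
    (A B : Subgroup (Matrix.unitaryGroup (Fin n) ℂ)) (hAB : A = B) (hSn : containsSn A)
    (q0 qA qB : Fin n) (hq : qA ≠ qB)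
    (As : Fin m → A) :
    ∃ Bs : Fin m → B,
      (canonicalProd (fun i => toMat (As i)) (fun i => toMat (Bs i))).mulVec
        (Pi.single q0 1) ≠ Pi.single qA 1 := by
  subst hAB
  obtain ⟨k, rfl⟩ := Nat.exists_eq_succ_of_ne_zero (Nat.one_le_iff_ne_zero.mp hm)
  -- choose a permutation σ with σ qA ≠ q0
  obtain ⟨σ, hσ⟩ : ∃ σ : Equiv.Perm (Fin n), σ qA ≠ q0 := by
    by_cases h : qA = q0
    · exact ⟨Equiv.swap qA qB, by simp [h ▸ (Equiv.swap_apply_left qA qB), h ▸ hq.symm]⟩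
    · exact ⟨1, h⟩
  obtain ⟨P, hPA, hPmat⟩ := hSn σ
  refine ⟨fun i => if i = Fin.last k then ⟨P, hPA⟩ * (As i)⁻¹ else (As i)⁻¹, ?_⟩
  have hprod : canonicalProd (fun i => toMat (As i))
      (fun i => toMat (if i = Fin.last k then (⟨P, hPA⟩ : A) * (As i)⁻¹ else (As i)⁻¹))
      = σ.permMatrix ℂ := by
    have hfun : ∀ i : Fin (k + 1),
        toMat (if i = Fin.last k then (⟨P, hPA⟩ : A) * (As i)⁻¹ else (As i)⁻¹) *
          toMat (As i) = if i = Fin.last k then σ.permMatrix ℂ else 1 := by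
      intro i
      by_cases h : i = Fin.last k <;> simp only [h, if_true, if_false, toMat]
      · push_cast
        rw [mul_assoc]
        norm_cast
        simp [hPmat]
      · norm_cast
        simp
    unfold canonicalProd
    simp only [hfun]
    rw [List.ofFn_succ']
    simp only [Fin.castSucc_lt_last, if_neg (Fin.castSucc_lt_last _).ne, if_pos rfl]
    rw [List.concat_eq_append, List.reverse_append, List.reverse_singleton,
      List.singleton_append, List.prod_cons]
    rw [List.prod_eq_one, mul_one]
    · simp
    · intro x hx
      rw [List.mem_reverse, List.mem_ofFn] at hx
      obtain ⟨i, rfl⟩ := hx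
      rfl
  rw [hprod]
  intro hEq
  have := congrFun hEq qA
  have h1 : ((σ.permMatrix ℂ).mulVec (Pi.single q0 1)) qA = (Pi.single q0 1 : Fin n → ℂ) (σ qA) := by
    simp [Matrix.mulVec, dotProduct, PEquiv.toMatrix, Equiv.toPEquiv]
  rw [h1] at this
  simp [Pi.single_apply, hσ] at this
end

section
/- In a canonical game of 2m rounds (m ≥ 1) on ℂ^n, if both players use the same action group, i.e. A = B is a subgroup of the unitary group U(n) that contains every n×n permutation matrix, then player 2 has no strong winning strategy: for every sequence B_1, …, B_m ∈ B there exists a sequence A_1, …, A_m ∈ A such that B_m A_m ⋯ B_1 A_1 e_{q0} ≠ e_{qB}. -/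
theorem exists_reverse_prod_ofFn_mul_eq {G : Type*} [Group G] {m : ℕ} (Bs : Fin (m + 1) → G)
    (g : G) : ∃ As : Fin (m + 1) → G, ((List.ofFn fun i => Bs i * As i).reverse).prod = g := by
  induction m generalizing g with
  | zero => exact ⟨fun _ => (Bs 0)⁻¹ * g, by simp⟩
  | succ m ih =>
    obtain ⟨As, hAs⟩ := ih (fun i => Bs i.castSucc) 1
    refine ⟨Fin.snoc As ((Bs (Fin.last _))⁻¹ * g), ?_⟩
    rw [List.ofFn_succ']
    simp only [Fin.snoc_castSucc, Fin.snoc_last, List.concat_eq_append,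
      List.reverse_append, List.reverse_cons, List.reverse_nil, List.nil_append,
      List.singleton_append, List.prod_cons, hAs]
    group

noncomputable def toMatHom {n : ℕ} (G : Subgroup (Matrix.unitaryGroup (Fin n) ℂ)) :
    G →* Matrix (Fin n) (Fin n) ℂ :=
  (unitary (Matrix (Fin n) (Fin n) ℂ)).subtype.comp G.subtype

theorem canonicalProd_toMat {n m : ℕ} (G : Subgroup (Matrix.unitaryGroup (Fin n) ℂ))
    (As Bs : Fin m → G) :
    canonicalProd (fun i => toMat (As i)) (fun i => toMat (Bs i)) =
      toMatHom G ((List.ofFn fun i => Bs i * As i).reverse).prod := by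
  rw [canonicalProd, map_list_prod, List.map_reverse, List.map_ofFn]
  rfl

theorem Equiv.Perm.exists_apply_ne {α : Type*} [DecidableEq α] [Nontrivial α] (a b : α) :
    ∃ σ : Equiv.Perm α, σ a ≠ b := by
  obtain ⟨c, hc⟩ := exists_ne b
  exact ⟨Equiv.swap a c, by rwa [Equiv.swap_apply_left]⟩

theorem canonical_same_group_no_sws_player2_general
    (n m : ℕ) (hn : 2 ≤ n) (hm : 1 ≤ m)
    (A B : Subgroup (Matrix.unitaryGroup (Fin n) ℂ)) (hAB : A = B) (hSn : containsSn B)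
    (q0 qB : Fin n)
    (Bs : Fin m → B) :
    ∃ As : Fin m → A,
      (canonicalProd (fun i => toMat (As i)) (fun i => toMat (Bs i))).mulVec
        (Pi.single q0 1) ≠ Pi.single qB 1 := by
  subst hAB
  have : Nontrivial (Fin n) := Fin.nontrivial_iff_two_le.mpr hn
  obtain ⟨σ, hσ⟩ := Equiv.Perm.exists_apply_ne qB q0
  obtain ⟨P, hPA, hP⟩ := hSn σ
  obtain ⟨k, rfl⟩ := Nat.exists_eq_add_of_le' hm
  obtain ⟨As, hAs⟩ := exists_reverse_prod_ofFn_mul_eq Bs ⟨P, hPA⟩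
  refine ⟨As, fun h => ?_⟩
  have h_qB := congrFun h qB
  rw [canonicalProd_toMat, hAs, show toMatHom _ ⟨P, hPA⟩ = σ.permMatrix ℂ from hP,
    Matrix.permMatrix_mulVec, Function.comp_apply, Pi.single_eq_of_ne hσ, Pi.single_eq_same]
    at h_qB
  exact zero_ne_one h_qB

/-- In a canonical game of `2m` rounds on `ℂ^n`, if both players use the same action
group containing every permutation matrix, then player 2 has no strong winning
strategy. -/
theorem canonical_same_group_no_sws_player2
    (n m : ℕ) (hn : 2 ≤ n) (hm : 1 ≤ m)
    (A B : Subgroup (Matrix.unitaryGroup (Fin n) ℂ)) (hAB : A = B) (hSn : containsSn B)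
    (q0 qA qB : Fin n) (hq : qA ≠ qB)
    (Bs : Fin m → B) :
    ∃ As : Fin m → A,
      (canonicalProd (fun i => toMat (As i)) (fun i => toMat (Bs i))).mulVec
        (Pi.single q0 1) ≠ Pi.single qB 1 :=
  canonical_same_group_no_sws_player2_general n m hn hm A B hAB hSn q0 qB Bs
end

section
/- (Two classical players with the same action group.) In a canonical game of 2m rounds (m ≥ 1) on ℂ^n where both players' action group is exactly the group of n×n permutation matrices (the standard matrix representation of S_n), neither player has a strong winning strategy: for every sequence of permutation matrices A_1, …, A_m there exist permutation matrices B_1, …, B_m with B_m A_m ⋯ B_1 A_1 e_{q0} ≠ e_{qA}, and for every sequence of permutation matrices B_1, …, B_m there exist permutation matrices A_1, …, A_m with B_m A_m ⋯ B_1 A_1 e_{q0} ≠ e_{qB}. -/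
/-
In a game played with permutation matrices the final state is the basis vector `e_{π⁻¹ q0}`,
where `π = A_1 B_1 ⋯ A_m B_m` is the corresponding product of permutations. Whoever controls
one factor of a group product can make the product any prescribed element, so either player
can force the final state to be their own target. Since `qA ≠ qB`, each player can therefore
defeat any strategy of the other.
-/

open Equiv Matrix

theorem Matrix.permMatrix_mulVec_single {R ι : Type*} [CommRing R] [DecidableEq ι] [Fintype ι]
    (σ : Perm ι) (q : ι) : σ.permMatrix R *ᵥ Pi.single q 1 = Pi.single (σ⁻¹ q) 1 := by
  rw [permMatrix_mulVec]
  ext i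
  simp [Pi.single_apply, Equiv.eq_symm_apply]

theorem exists_right_factors_prod_ofFn_eq {G : Type*} [Group G] {k : ℕ} (a : Fin (k + 1) → G)
    (g : G) : ∃ b : Fin (k + 1) → G, (List.ofFn fun i => a i * b i).prod = g :=
  ⟨Fin.cases ((a 0)⁻¹ * g) fun i => (a i.succ)⁻¹, by simp [List.ofFn_succ]⟩

theorem exists_left_factors_prod_ofFn_eq {G : Type*} [Group G] {k : ℕ} (b : Fin (k + 1) → G)
    (g : G) : ∃ a : Fin (k + 1) → G, (List.ofFn fun i => a i * b i).prod = g :=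
  ⟨Fin.cases (g * (b 0)⁻¹) fun i => (b i.succ)⁻¹, by simp [List.ofFn_succ]⟩

theorem canonicalProd_permMatrix {n m : ℕ} (As Bs : Fin m → Perm (Fin n)) :
    canonicalProd (fun i => (As i).permMatrix ℂ) (fun i => (Bs i).permMatrix ℂ) =
      (List.ofFn fun i => As i * Bs i).prod.permMatrix ℂ := by
  induction m with
  | zero => simp [canonicalProd]
  | succ k ih =>
    have ih' := ih (fun i => As i.succ) (fun i => Bs i.succ)
    simp only [canonicalProd] at ih' ⊢
    simp [List.ofFn_succ, ih', mul_assoc]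

theorem canonicalProd_permMatrix_mulVec_single {n m : ℕ} (As Bs : Fin m → Perm (Fin n))
    (q : Fin n) :
    canonicalProd (fun i => (As i).permMatrix ℂ) (fun i => (Bs i).permMatrix ℂ) *ᵥ
      Pi.single q 1 = Pi.single ((List.ofFn fun i => As i * Bs i).prod⁻¹ q) 1 := by
  rw [canonicalProd_permMatrix, permMatrix_mulVec_single]

theorem Pi.single_one_ne_single_one {ι M : Type*} [DecidableEq ι] [Zero M] [One M]
    [NeZero (1 : M)] {a b : ι} (h : a ≠ b) : (Pi.single a 1 : ι → M) ≠ Pi.single b 1 := by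
  intro hab
  simpa [h] using congrFun hab a

theorem canonical_classical_players_no_sws_general
    (n m : ℕ) (hm : 1 ≤ m)
    (q0 qA qB : Fin n) (hq : qA ≠ qB) :
    (∀ As : Fin m → Equiv.Perm (Fin n), ∃ Bs : Fin m → Equiv.Perm (Fin n),
      (canonicalProd (fun i => (As i).permMatrix ℂ) (fun i => (Bs i).permMatrix ℂ)).mulVec
        (Pi.single q0 1) ≠ Pi.single qA 1) ∧
    (∀ Bs : Fin m → Equiv.Perm (Fin n), ∃ As : Fin m → Equiv.Perm (Fin n),
      (canonicalProd (fun i => (As i).permMatrix ℂ) (fun i => (Bs i).permMatrix ℂ)).mulVec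
        (Pi.single q0 1) ≠ Pi.single qB 1) := by
  obtain ⟨k, rfl⟩ : ∃ k, m = k + 1 := ⟨m - 1, by omega⟩
  have swap_inv_apply_left (q : Fin n) : (swap q0 q)⁻¹ q0 = q := by simp
  constructor
  · intro As
    obtain ⟨Bs, hBs⟩ := exists_right_factors_prod_ofFn_eq As (swap q0 qB)
    refine ⟨Bs, ?_⟩
    rw [canonicalProd_permMatrix_mulVec_single, hBs, swap_inv_apply_left]
    exact Pi.single_one_ne_single_one hq.symm
  · intro Bs
    obtain ⟨As, hAs⟩ := exists_left_factors_prod_ofFn_eq Bs (swap q0 qA)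
    refine ⟨As, ?_⟩
    rw [canonicalProd_permMatrix_mulVec_single, hAs, swap_inv_apply_left]
    exact Pi.single_one_ne_single_one hq

/-- Two classical players with the same action group: in a canonical game of `2m`
rounds where both players' moves are exactly the `n × n` permutation matrices,
neither player has a strong winning strategy. -/
theorem canonical_classical_players_no_sws
    (n m : ℕ) (hn : 2 ≤ n) (hm : 1 ≤ m)
    (q0 qA qB : Fin n) (hq : qA ≠ qB) :
    (∀ As : Fin m → Equiv.Perm (Fin n), ∃ Bs : Fin m → Equiv.Perm (Fin n),
      (canonicalProd (fun i => (As i).permMatrix ℂ) (fun i => (Bs i).permMatrix ℂ)).mulVec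
        (Pi.single q0 1) ≠ Pi.single qA 1) ∧
    (∀ Bs : Fin m → Equiv.Perm (Fin n), ∃ As : Fin m → Equiv.Perm (Fin n),
      (canonicalProd (fun i => (As i).permMatrix ℂ) (fun i => (Bs i).permMatrix ℂ)).mulVec
        (Pi.single q0 1) ≠ Pi.single qB 1) :=
  canonical_classical_players_no_sws_general n m hm q0 qA qB hq
end

section
/- (Two quantum players with the same action group.) In a canonical game of 2m rounds (m ≥ 1) on ℂ^n between two quantum players whose common action group A = B is any subgroup of U(n) containing every n×n permutation matrix, no player possesses a strong winning strategy: no sequence of moves of either player forces the final state to equal that player's target basis vector against every sequence of moves of the opponent. -/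
lemma permMatrix_mulVec_single {n : ℕ} (σ : Equiv.Perm (Fin n)) (q : Fin n) :
    (σ.permMatrix ℂ).mulVec (Pi.single q 1) = Pi.single (σ⁻¹ q) 1 := by
  funext i
  have hiff : σ i = q ↔ i = σ⁻¹ q := by
    constructor
    · rintro rfl; simp
    · rintro rfl; simp
  simp [Matrix.mulVec_single, Equiv.Perm.permMatrix, PEquiv.toMatrix, Equiv.toPEquiv,
    Pi.single_apply, hiff]

lemma single_ne_single {n : ℕ} {p q : Fin n} (h : p ≠ q) :
    (Pi.single p 1 : Fin n → ℂ) ≠ Pi.single q 1 := by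
  intro hc
  have := congrFun hc p
  simp [Pi.single_apply, h] at this

lemma toMat_one {n : ℕ} {G : Subgroup (Matrix.unitaryGroup (Fin n) ℂ)} :
    toMat (1 : G) = 1 := rfl

lemma toMat_isUnit {n : ℕ} {G : Subgroup (Matrix.unitaryGroup (Fin n) ℂ)} (x : G) :
    IsUnit (toMat x) :=
  (Unitary.toUnits (x : Matrix.unitaryGroup (Fin n) ℂ)).isUnit

lemma revProd_succ' {n m : ℕ} (f : Fin (m + 1) → Matrix (Fin n) (Fin n) ℂ) :
    ((List.ofFn f).reverse).prod
      = f (Fin.last m) * ((List.ofFn fun i => f i.castSucc).reverse).prod := by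
  rw [List.ofFn_succ', List.concat_eq_append, List.reverse_append]
  simp

lemma revProd_succ {n m : ℕ} (f : Fin (m + 1) → Matrix (Fin n) (Fin n) ℂ) :
    ((List.ofFn f).reverse).prod
      = ((List.ofFn fun i => f i.succ).reverse).prod * f 0 := by
  rw [List.ofFn_succ, List.reverse_cons]
  simp

/-- Two quantum players with the same action group: in a canonical game of `2m` rounds
where the common action group `A = B ≤ U(n)` contains every permutation matrix,
no player possesses a strong winning strategy. -/
theorem canonical_quantum_players_no_sws
    (n m : ℕ) (hn : 2 ≤ n) (hm : 1 ≤ m)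
    (A B : Subgroup (Matrix.unitaryGroup (Fin n) ℂ)) (hAB : A = B) (hSn : containsSn A)
    (q0 qA qB : Fin n) (hq : qA ≠ qB) :
    (∀ As : Fin m → A, ∃ Bs : Fin m → B,
      (canonicalProd (fun i => toMat (As i)) (fun i => toMat (Bs i))).mulVec
        (Pi.single q0 1) ≠ Pi.single qA 1) ∧
    (∀ Bs : Fin m → B, ∃ As : Fin m → A,
      (canonicalProd (fun i => toMat (As i)) (fun i => toMat (Bs i))).mulVec
        (Pi.single q0 1) ≠ Pi.single qB 1) := by
  obtain ⟨k, rfl⟩ : ∃ k, m = k + 1 := ⟨m - 1, (Nat.succ_pred_eq_of_pos hm).symm⟩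
  subst hAB
  constructor
  · -- player 1 has no strong winning strategy
    intro As
    -- Bs with all 1 except possibly the last entry Q
    set mkBs : A → (Fin (k + 1) → A) :=
      fun Q i => if i = Fin.last k then Q else 1 with hmkBs
    have key : ∀ Q : A,
        canonicalProd (fun i => toMat (As i)) (fun i => toMat (mkBs Q i))
          = toMat Q * (toMat (As (Fin.last k)) *
            ((List.ofFn fun i : Fin k =>
              toMat (mkBs Q i.castSucc) * toMat (As i.castSucc)).reverse).prod) := by
      intro Q
      rw [canonicalProd, revProd_succ']
      simp [hmkBs, mul_assoc]
    have hRindep : ∀ Q : A, (List.ofFn fun i : Fin k =>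
          toMat (mkBs Q i.castSucc) * toMat (As i.castSucc))
        = (List.ofFn fun i : Fin k =>
          toMat (mkBs 1 i.castSucc) * toMat (As i.castSucc)) := by
      intro Q
      congr 1
      funext i
      simp [hmkBs, (Fin.castSucc_lt_last i).ne]
    set w : Fin n → ℂ := (toMat (As (Fin.last k)) *
        ((List.ofFn fun i : Fin k =>
          toMat (mkBs 1 i.castSucc) * toMat (As i.castSucc)).reverse).prod).mulVec
        (Pi.single q0 1) with hw
    have final : ∀ Q : A,
        (canonicalProd (fun i => toMat (As i)) (fun i => toMat (mkBs Q i))).mulVec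
          (Pi.single q0 1) = (toMat Q).mulVec w := by
      intro Q
      rw [key Q, hRindep Q, ← Matrix.mulVec_mulVec, hw]
    by_cases hwA : w = Pi.single qA 1
    · -- play the swap of qA and qB at the last move
      obtain ⟨P, hPA, hP⟩ := hSn (Equiv.swap qA qB)
      refine ⟨mkBs ⟨P, hPA⟩, ?_⟩
      rw [final ⟨P, hPA⟩, hwA]
      have : toMat (⟨P, hPA⟩ : A) = (Equiv.swap qA qB).permMatrix ℂ := hP
      rw [this, permMatrix_mulVec_single]
      simpa [Equiv.swap_apply_left] using single_ne_single hq.symm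
    · refine ⟨mkBs 1, ?_⟩
      rw [final 1, toMat_one, Matrix.one_mulVec]
      exact hwA
  · -- player 2 has no strong winning strategy
    intro Bs
    set mkAs : A → (Fin (k + 1) → A) :=
      fun Q i => if i = 0 then Q else 1 with hmkAs
    have key : ∀ Q : A,
        canonicalProd (fun i => toMat (mkAs Q i)) (fun i => toMat (Bs i))
          = (((List.ofFn fun i : Fin k =>
              toMat (Bs i.succ) * toMat (mkAs Q i.succ)).reverse).prod * toMat (Bs 0))
            * toMat Q := by
      intro Q
      rw [canonicalProd, revProd_succ]
      simp [hmkAs, mul_assoc]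
    have hRindep : ∀ Q : A, (List.ofFn fun i : Fin k =>
          toMat (Bs i.succ) * toMat (mkAs Q i.succ))
        = (List.ofFn fun i : Fin k => toMat (Bs i.succ) * toMat (mkAs 1 i.succ)) := by
      intro Q
      have h : ∀ i : Fin k, mkAs Q i.succ = 1 := fun i => by
        simp [hmkAs, Fin.succ_ne_zero i]
      have h1 : ∀ i : Fin k, mkAs (1 : A) i.succ = 1 := fun i => by
        simp [hmkAs, Fin.succ_ne_zero i]
      simp only [h, h1]
    set C : Matrix (Fin n) (Fin n) ℂ :=
      ((List.ofFn fun i : Fin k =>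
        toMat (Bs i.succ) * toMat (mkAs 1 i.succ)).reverse).prod * toMat (Bs 0) with hC
    have final : ∀ Q : A,
        (canonicalProd (fun i => toMat (mkAs Q i)) (fun i => toMat (Bs i))).mulVec
          (Pi.single q0 1) = C.mulVec ((toMat Q).mulVec (Pi.single q0 1)) := by
      intro Q
      rw [key Q, hRindep Q, ← Matrix.mulVec_mulVec, hC]
    have hCunit : IsUnit C := by
      apply IsUnit.mul
      · apply List.prod_isUnit
        intro x hx
        rw [List.mem_reverse, List.mem_ofFn] at hx
        obtain ⟨i, rfl⟩ := hx
        exact (toMat_isUnit _).mul (toMat_isUnit _)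
      · exact toMat_isUnit _
    have hCinj : Function.Injective C.mulVec := by
      obtain ⟨u, hu⟩ := hCunit
      intro x y hxy
      have h2 : ((u⁻¹ : (Matrix (Fin n) (Fin n) ℂ)ˣ) : Matrix (Fin n) (Fin n) ℂ).mulVec
            (C.mulVec x)
          = ((u⁻¹ : (Matrix (Fin n) (Fin n) ℂ)ˣ) : Matrix (Fin n) (Fin n) ℂ).mulVec
            (C.mulVec y) := by rw [hxy]
      rwa [Matrix.mulVec_mulVec, Matrix.mulVec_mulVec, ← hu, Units.inv_mul,
        Matrix.one_mulVec, Matrix.one_mulVec] at h2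
    by_cases h0 : C.mulVec (Pi.single q0 1) = Pi.single qB 1
    · -- play a permutation moving q0 to some other index first
      haveI : Nontrivial (Fin n) := Fin.nontrivial_iff_two_le.mpr hn
      obtain ⟨q1, hq1⟩ : ∃ q1 : Fin n, q1 ≠ q0 := exists_ne q0
      obtain ⟨P, hPB, hP⟩ := hSn (Equiv.swap q0 q1)
      refine ⟨mkAs ⟨P, hPB⟩, ?_⟩
      rw [final ⟨P, hPB⟩]
      have : toMat (⟨P, hPB⟩ : A) = (Equiv.swap q0 q1).permMatrix ℂ := hP
      rw [this, permMatrix_mulVec_single]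
      intro hc
      have : (Pi.single ((Equiv.swap q0 q1)⁻¹ q0) 1 : Fin n → ℂ) = Pi.single q0 1 :=
        hCinj (by rw [hc, h0])
      rw [Equiv.swap_inv, Equiv.swap_apply_left] at this
      exact single_ne_single hq1 this
    · refine ⟨mkAs 1, ?_⟩
      rw [final 1, toMat_one, Matrix.one_mulVec]
      exact h0
end

section
/- In a noncanonical game of 2m+1 rounds (m ≥ 1) on ℂ^n in which player 1 makes the first and the last move, if both players use the same action group, i.e. A = B is a subgroup of the unitary group U(n) that contains every n×n permutation matrix, then player 2 has no strong winning strategy: for every sequence B_1, …, B_m ∈ B there exists a sequence A_1, …, A_m, A_{m+1} ∈ A such that A_{m+1} B_m A_m ⋯ B_1 A_1 e_{q0} ≠ e_{qB}. -/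
lemma permMatrix_mulVec {n : ℕ} (σ : Equiv.Perm (Fin n)) (j : Fin n) :
    (σ.permMatrix ℂ).mulVec (Pi.single j 1) = Pi.single (σ⁻¹ j) 1 := by
  funext i
  simp [Matrix.mulVec, dotProduct, Equiv.Perm.permMatrix, PEquiv.toMatrix,
    Equiv.toPEquiv, Pi.single_apply, eq_comm, Equiv.eq_symm_apply, Equiv.Perm.inv_def]


/-- In a noncanonical game of `2m+1` rounds where player 1 makes the first and the last
move, if both players use the same action group containing every permutation matrix,
then player 2 has no strong winning strategy. -/
theorem noncanonical_same_group_no_sws_player2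
    (n m : ℕ) (hn : 2 ≤ n) (hm : 1 ≤ m)
    (A B : Subgroup (Matrix.unitaryGroup (Fin n) ℂ)) (hAB : A = B) (hSn : containsSn B)
    (q0 qA qB : Fin n) (hq : qA ≠ qB)
    (Bs : Fin m → B) :
    ∃ As : Fin (m + 1) → A,
      (noncanonicalProd (fun i => toMat (As i)) (fun i => toMat (Bs i))).mulVec
        (Pi.single q0 1) ≠ Pi.single qB 1 := by
  subst hAB
  -- the product of player 2's moves with identity interleavings
  set L : Matrix (Fin n) (Fin n) ℂ :=
    ((List.ofFn fun i : Fin m => toMat (Bs i) * toMat (1 : A)).reverse).prod with hL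
  have hne : (Pi.single qA 1 : Fin n → ℂ) ≠ Pi.single qB 1 := by
    intro h
    have := congrFun h qA
    simp [Pi.single_apply, hq] at this
  by_cases hv : L.mulVec (Pi.single q0 1) = Pi.single qB 1
  · -- choose the swap permutation as the last move
    obtain ⟨P, hP, hPmat⟩ := hSn (Equiv.swap qA qB)
    refine ⟨fun i => if i = Fin.last m then ⟨P, hP⟩ else 1, ?_⟩
    have hlast : toMat ((fun i : Fin (m+1) =>
        if i = Fin.last m then (⟨P, hP⟩ : A) else 1) (Fin.last m)) =
        (Equiv.swap qA qB).permMatrix ℂ := by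
      simp [toMat, hPmat]
    have hcs : ∀ i : Fin m, ((fun i : Fin (m+1) =>
        if i = Fin.last m then (⟨P, hP⟩ : A) else 1) i.castSucc) = 1 := by
      intro i
      simp [(Fin.castSucc_lt_last i).ne]
    rw [noncanonicalProd, hlast]
    have : (List.ofFn fun i : Fin m => toMat (Bs i) * toMat ((fun i : Fin (m+1) =>
        if i = Fin.last m then (⟨P, hP⟩ : A) else 1) i.castSucc)) =
        List.ofFn fun i : Fin m => toMat (Bs i) * toMat (1 : A) := by
      congr 1; funext i; rw [hcs]
    rw [this, ← hL, ← Matrix.mulVec_mulVec, hv, permMatrix_mulVec]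
    simpa [hq] using hne
  · refine ⟨fun _ => 1, ?_⟩
    rw [noncanonicalProd]
    have h1 : toMat (1 : A) = (1 : Matrix (Fin n) (Fin n) ℂ) := rfl
    simp only [h1, one_mul, ← hL]
    exact hv
end

section
/- In a canonical game of 2m rounds (m ≥ 1) on ℂ^n in which the action group A of player 1 contains every n×n permutation matrix and is a proper subgroup of the action group B of player 2 (S_n ≤ A < B ≤ U(n)), player 1 has no strong winning strategy: for every sequence A_1, …, A_m ∈ A there exists a sequence B_1, …, B_m ∈ B such that B_m A_m ⋯ B_1 A_1 e_{q0} ≠ e_{qA}. -/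
lemma canonicalProd_last {n k : ℕ} (f g : Fin (k+1) → Matrix (Fin n) (Fin n) ℂ) :
    canonicalProd f g = (g (Fin.last k) * f (Fin.last k)) *
      canonicalProd (fun i : Fin k => f i.castSucc) (fun i => g i.castSucc) := by
  unfold canonicalProd
  rw [List.ofFn_succ']
  simp [List.reverse_concat]

lemma canonicalProd_if_last {n k : ℕ} (f : Fin (k+1) → Matrix (Fin n) (Fin n) ℂ)
    (X : Matrix (Fin n) (Fin n) ℂ) :
    canonicalProd f (fun i => if i = Fin.last k then X else 1) =
      X * canonicalProd f (fun _ => 1) := by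
  rw [canonicalProd_last, canonicalProd_last]
  have h : ∀ i : Fin k,
      (if (i.castSucc : Fin (k+1)) = Fin.last k then X else 1)
        = (1 : Matrix (Fin n) (Fin n) ℂ) := by
    intro i; rw [if_neg (Fin.ne_of_lt i.castSucc_lt_last)]
  simp only [if_pos rfl, if_true, h, one_mul, mul_assoc]

lemma swap_permMatrix_mulVec {n : ℕ} (qA qB : Fin n) (hq : qA ≠ qB) :
    ((Equiv.swap qA qB).permMatrix ℂ).mulVec (Pi.single qA 1) = Pi.single qB 1 := by
  funext i
  simp [Matrix.mulVec_single, PEquiv.toMatrix_apply, Equiv.toPEquiv_apply, Pi.single_apply,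
    Equiv.swap_apply_def]
  split_ifs <;> simp_all

/-- In a canonical game of `2m` rounds where the action group `A` of player 1 contains
every permutation matrix and is a proper subgroup of the action group `B` of player 2
(`S_n ≤ A < B ≤ U(n)`), player 1 has no strong winning strategy. -/
theorem canonical_A_lt_B_no_sws_player1
    (n m : ℕ) (hn : 2 ≤ n) (hm : 1 ≤ m)
    (A B : Subgroup (Matrix.unitaryGroup (Fin n) ℂ)) (hAB : A < B) (hSn : containsSn A)
    (q0 qA qB : Fin n) (hq : qA ≠ qB)
    (As : Fin m → A) :
    ∃ Bs : Fin m → B,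
      (canonicalProd (fun i => toMat (As i)) (fun i => toMat (Bs i))).mulVec
        (Pi.single q0 1) ≠ Pi.single qA 1 := by
  obtain ⟨k, rfl⟩ : ∃ k, m = k + 1 :=
    ⟨m - 1, (Nat.succ_pred_eq_of_pos hm).symm⟩
  set f : Fin (k+1) → Matrix (Fin n) (Fin n) ℂ := fun i => toMat (As i) with hf
  by_cases h : (canonicalProd f fun _ => (1 : Matrix (Fin n) (Fin n) ℂ)).mulVec
      (Pi.single q0 1) = Pi.single qA 1
  · -- play the swap at the last move
    obtain ⟨P, hPA, hP⟩ := hSn (Equiv.swap qA qB)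
    refine ⟨fun i => if i = Fin.last k then ⟨P, hAB.le hPA⟩ else 1, ?_⟩
    have hBs : (fun i : Fin (k+1) =>
        toMat (if i = Fin.last k then (⟨P, hAB.le hPA⟩ : B) else 1))
        = fun i => if i = Fin.last k then ((Equiv.swap qA qB).permMatrix ℂ) else 1 := by
      funext i
      split_ifs <;> simp [toMat, hP]
    rw [hBs, canonicalProd_if_last, ← Matrix.mulVec_mulVec, h,
      swap_permMatrix_mulVec qA qB hq]
    intro hcon
    have := congrFun hcon qA
    simp [Pi.single_apply, hq, Ne.symm hq] at this
  · -- play identity everywhere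
    refine ⟨fun _ => 1, ?_⟩
    have : (fun i : Fin (k+1) => toMat (1 : B)) = fun _ => (1 : Matrix (Fin n) (Fin n) ℂ) := by
      funext i; rfl
    rw [this]
    exact h
end

section
/- Consider a noncanonical game of 2m+1 rounds (m ≥ 1) on ℂ^n in which player 1 makes the first and the last move. If the action group A of player 1 contains a unitary U such that the state ψ = U e_{q0} is invariant under the action group B of player 2 (i.e. B_i ψ = ψ for every B_i ∈ B), and player 1's target state equals the initial state, e_{qA} = e_{q0}, then player 1 has a strong winning strategy: there exist A_1, …, A_{m+1} ∈ A (namely A_1 = U, A_2 = ⋯ = A_m = I, A_{m+1} = U^{-1}) such that for every choice B_1, …, B_m ∈ B one has A_{m+1} B_m A_m ⋯ B_1 A_1 e_{q0} = e_{q0}. -/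
/-!
Player 1 opens with `U`, which moves `e_{q0}` to the `B`-invariant state `ψ = U e_{q0}`, and then
passes with the identity, so `ψ` survives every move of player 2. The closing move `U⁻¹` returns
`ψ` to `e_{q0} = e_{qA}`.
-/

open Matrix

lemma List.prod_mulVec_eq_self {ι R : Type*} [Fintype ι] [DecidableEq ι] [CommSemiring R]
    {ψ : ι → R} (l : List (Matrix ι ι R)) (h : ∀ M ∈ l, M *ᵥ ψ = ψ) : l.prod *ᵥ ψ = ψ :=
  List.prod_induction (fun M => M *ᵥ ψ = ψ)
    (fun M N hM hN => by rw [← mulVec_mulVec, hN, hM]) (one_mulVec ψ) h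

lemma noncanonicalProd_succ {n k : ℕ} (As : Fin (k + 2) → Matrix (Fin n) (Fin n) ℂ)
    (Bs : Fin (k + 1) → Matrix (Fin n) (Fin n) ℂ) :
    noncanonicalProd As Bs = As (Fin.last (k + 1)) *
      (List.ofFn fun j : Fin k => Bs j.succ * As j.succ.castSucc).reverse.prod *
      (Bs 0 * As 0) := by
  rw [noncanonicalProd, List.ofFn_succ, List.reverse_cons, List.prod_append,
    List.prod_singleton, Fin.castSucc_zero, mul_assoc]

lemma noncanonicalProd_mulVec_of_forall_mulVec_eq_self {n k : ℕ}
    {As : Fin (k + 2) → Matrix (Fin n) (Fin n) ℂ} {Bs : Fin (k + 1) → Matrix (Fin n) (Fin n) ℂ}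
    {v ψ : Fin n → ℂ} (h0 : As 0 *ᵥ v = ψ) (hA : ∀ j : Fin k, As j.succ.castSucc *ᵥ ψ = ψ)
    (hB : ∀ i, Bs i *ᵥ ψ = ψ) :
    noncanonicalProd As Bs *ᵥ v = As (Fin.last (k + 1)) *ᵥ ψ := by
  have hmid : (List.ofFn fun j : Fin k => Bs j.succ * As j.succ.castSucc).reverse.prod *ᵥ ψ
      = ψ := by
    refine List.prod_mulVec_eq_self _ fun M hM => ?_
    obtain ⟨j, rfl⟩ := List.mem_ofFn.mp (List.mem_reverse.mp hM)
    rw [← mulVec_mulVec, hA, hB]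
  rw [noncanonicalProd_succ, ← mulVec_mulVec, ← mulVec_mulVec, ← mulVec_mulVec, h0, hB, hmid]

def conjugatingStrategy {G : Type*} [Group G] (k : ℕ) (U : G) : Fin (k + 2) → G :=
  Fin.cons U (Fin.snoc (α := fun _ => G) (fun _ => 1) U⁻¹)

section
variable {G : Type*} [Group G] (k : ℕ) (U : G)

@[simp] lemma conjugatingStrategy_last : conjugatingStrategy k U (Fin.last (k + 1)) = U⁻¹ := by
  simp [conjugatingStrategy, ← Fin.succ_last]

@[simp] lemma conjugatingStrategy_castSucc_succ (j : Fin k) :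
    conjugatingStrategy k U j.castSucc.succ = 1 := by
  simp [conjugatingStrategy]
end

theorem noncanonical_invariant_state_target_initial_sws_player1_general
    (n m : ℕ) (hm : 1 ≤ m)
    (A B : Subgroup (Matrix.unitaryGroup (Fin n) ℂ))
    (q0 qA : Fin n) (hqA : qA = q0)
    (U : Matrix.unitaryGroup (Fin n) ℂ) (hU : U ∈ A)
    (hinv : ∀ Bi ∈ B, ((Bi : Matrix.unitaryGroup (Fin n) ℂ) : Matrix (Fin n) (Fin n) ℂ).mulVec
        ((U : Matrix (Fin n) (Fin n) ℂ).mulVec (Pi.single q0 1))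
      = (U : Matrix (Fin n) (Fin n) ℂ).mulVec (Pi.single q0 1)) :
    ∃ As : Fin (m + 1) → A, ∀ Bs : Fin m → B,
      (noncanonicalProd (fun i => toMat (As i)) (fun i => toMat (Bs i))).mulVec
        (Pi.single q0 1) = Pi.single qA 1 := by
  obtain ⟨k, rfl⟩ : ∃ k, m = k + 1 := ⟨m - 1, by omega⟩
  subst hqA
  set ψ : Fin n → ℂ := (U : Matrix (Fin n) (Fin n) ℂ) *ᵥ Pi.single qA 1
  refine ⟨conjugatingStrategy k ⟨U, hU⟩, fun Bs => ?_⟩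
  rw [noncanonicalProd_mulVec_of_forall_mulVec_eq_self (ψ := ψ)
    (As := fun i => toMat (conjugatingStrategy k (⟨U, hU⟩ : A) i)) (Bs := fun i => toMat (Bs i))
    rfl (fun j => by simp [toMat]) (fun i => hinv _ (Bs i).2)]
  simp only [conjugatingStrategy_last, toMat, InvMemClass.coe_inv, UnitaryGroup.inv_val, ψ,
    mulVec_mulVec, UnitaryGroup.star_mul_self, one_mulVec]

/-- Noncanonical game, different action groups: if the action group `A` of player 1
contains a unitary `U` driving the initial state to a state `ψ = U e_{q0}` invariant
under the action group `B` of player 2, and player 1's target state equals the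
initial state (`e_{qA} = e_{q0}`), then player 1 has a strong winning strategy. -/
theorem noncanonical_invariant_state_target_initial_sws_player1
    (n m : ℕ) (hn : 2 ≤ n) (hm : 1 ≤ m)
    (A B : Subgroup (Matrix.unitaryGroup (Fin n) ℂ))
    (q0 qA qB : Fin n) (hq : qA ≠ qB) (hqA : qA = q0)
    (U : Matrix.unitaryGroup (Fin n) ℂ) (hU : U ∈ A)
    (hinv : ∀ Bi ∈ B, ((Bi : Matrix.unitaryGroup (Fin n) ℂ) : Matrix (Fin n) (Fin n) ℂ).mulVec
        ((U : Matrix (Fin n) (Fin n) ℂ).mulVec (Pi.single q0 1))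
      = (U : Matrix (Fin n) (Fin n) ℂ).mulVec (Pi.single q0 1)) :
    ∃ As : Fin (m + 1) → A, ∀ Bs : Fin m → B,
      (noncanonicalProd (fun i => toMat (As i)) (fun i => toMat (Bs i))).mulVec
        (Pi.single q0 1) = Pi.single qA 1 :=
  noncanonical_invariant_state_target_initial_sws_player1_general n m hm A B q0 qA hqA U hU hinv
end
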